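/- (Upper bound on the size of the Levenshtein ball.) Let Γ be a finite type with more than one element, let S be a nonempty list over Γ, and let k ≥ 1. Then the cardinality of 𝒮_k(S,Γ) = {S' : List Γ | d_lev(S, S') ≤ k} satisfies |𝒮_k(S,Γ)| ≤ (|Γ| + 1)^k · (2·(|S| + k) − 1)^k, where the second factor is the product ∏_{j=1}^{k} (2·(|S| + k) − 1). -/

import Mathlib

/-- Cost structure for edit distance (removed from Mathlib; restated with its old meaning). -/
structure Levenshtein.Cost (α β δ : Type*) where
  delete : α → δ
  insert : β → δ
  substitute : α → β → δ

/-- The unit cost function (as formerly in Mathlib). -/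
def Levenshtein.defaultCost {α : Type*} [DecidableEq α] : Levenshtein.Cost α α ℕ where
  delete _ := 1
  insert _ := 1
  substitute a b := if a = b then 0 else 1

/-- Levenshtein distance, by the recursion Mathlib formerly proved for its `levenshtein`. -/
def levenshtein {α β : Type*} (C : Levenshtein.Cost α β ℕ) : List α → List β → ℕ
  | [], ys => (ys.map C.insert).sum
  | xs, [] => (xs.map C.delete).sum
  | x :: xs, y :: ys =>
    min (C.delete x + levenshtein C xs (y :: ys))
      (min (C.insert y + levenshtein C (x :: xs) ys) (C.substitute x y + levenshtein C xs ys))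

/-- The Levenshtein (edit) distance with unit costs. -/
def dlev {Γ : Type*} [DecidableEq Γ] (S S' : List Γ) : ℕ :=
  levenshtein Levenshtein.defaultCost S S'

/-! Every list within edit distance `k` of `S` is reached from `S` by `k` steps, each of which
keeps the current list `T`, deletes one of its letters, or inserts or substitutes a letter of `Γ`
at one of `|T| + 1`, resp. `|T|`, places. Together these are at most `(2|T| + 1)(|Γ| + 1)` choices,
and since `|T| ≤ |S| + k - 1` before the last step, each step contributes a factor of at most
`(2(|S| + k) - 1)(|Γ| + 1)`. -/

section dlev

variable {Γ : Type*} [DecidableEq Γ]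

@[simp] theorem dlev_nil_nil : dlev ([] : List Γ) [] = 0 := by
  simp [dlev, levenshtein]

@[simp] theorem dlev_nil_cons (y : Γ) (ys : List Γ) : dlev [] (y :: ys) = dlev [] ys + 1 := by
  simp only [dlev, levenshtein, List.map_cons, List.sum_cons, Levenshtein.defaultCost]
  omega

@[simp] theorem dlev_cons_nil (x : Γ) (xs : List Γ) : dlev (x :: xs) [] = dlev xs [] + 1 := by
  cases xs <;>
    simp only [dlev, levenshtein, List.map_cons, List.sum_cons, Levenshtein.defaultCost] <;> omega

theorem dlev_cons_cons (x y : Γ) (xs ys : List Γ) :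
    dlev (x :: xs) (y :: ys) =
      min (dlev xs (y :: ys) + 1)
        (min (dlev (x :: xs) ys + 1) (dlev xs ys + if x = y then 0 else 1)) := by
  simp only [dlev, levenshtein, Levenshtein.defaultCost]
  omega

end dlev

namespace Levenshtein

variable {Γ : Type*} [DecidableEq Γ] [Fintype Γ]

def edits (T : List Γ) : Finset (List Γ) :=
  insert T ((Finset.range T.length).image T.eraseIdx ∪
    ((Finset.range (T.length + 1) ×ˢ Finset.univ).image fun p => T.insertIdx p.1 p.2) ∪
    ((Finset.range T.length ×ˢ Finset.univ).image fun p => T.set p.1 p.2))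

theorem mem_edits {T T' : List Γ} :
    T' ∈ edits T ↔ T' = T ∨ (∃ i < T.length, T.eraseIdx i = T') ∨
      (∃ i < T.length + 1, ∃ a, T.insertIdx i a = T') ∨
      (∃ i < T.length, ∃ a, T.set i a = T') := by
  simp [edits]

theorem self_mem_edits (T : List Γ) : T ∈ edits T := mem_edits.2 (.inl rfl)

theorem mem_edits_cons (x : Γ) (T : List Γ) : T ∈ edits (x :: T) :=
  mem_edits.2 (.inr (.inl ⟨0, by simp, rfl⟩))

theorem cons_mem_edits (y : Γ) (T : List Γ) : y :: T ∈ edits T :=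
  mem_edits.2 (.inr (.inr (.inl ⟨0, by simp, y, rfl⟩)))

theorem cons_mem_edits_cons (x y : Γ) (T : List Γ) : y :: T ∈ edits (x :: T) :=
  mem_edits.2 (.inr (.inr (.inr ⟨0, by simp, y, rfl⟩)))

theorem cons_mem_edits_cons_of_mem {T T' : List Γ} (x : Γ) (h : T' ∈ edits T) :
    x :: T' ∈ edits (x :: T) := by
  rw [mem_edits] at h ⊢
  rcases h with rfl | ⟨i, hi, rfl⟩ | ⟨i, hi, a, rfl⟩ | ⟨i, hi, a, rfl⟩
  · exact .inl rfl
  · exact .inr (.inl ⟨i + 1, by simpa using hi, List.eraseIdx_cons_succ⟩)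
  · exact .inr (.inr (.inl ⟨i + 1, by simpa using hi, a, List.insertIdx_succ_cons⟩))
  · exact .inr (.inr (.inr ⟨i + 1, by simpa using hi, a, List.set_cons_succ⟩))

theorem length_le_of_mem_edits {T T' : List Γ} (h : T' ∈ edits T) :
    T'.length ≤ T.length + 1 := by
  rcases mem_edits.1 h with rfl | ⟨i, -, rfl⟩ | ⟨i, -, a, rfl⟩ | ⟨i, -, a, rfl⟩
  · omega
  · have := T.length_eraseIdx_le i
    omega
  · exact List.length_insertIdx_le_succ
  · simp

theorem card_edits_le (T : List Γ) :
    (edits T).card ≤ (2 * T.length + 1) * (Fintype.card Γ + 1) := by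
  calc (edits T).card
      ≤ T.length + (T.length + 1) * Fintype.card Γ + T.length * Fintype.card Γ + 1 := by
        refine (Finset.card_insert_le _ _).trans (Nat.add_le_add_right ?_ 1)
        refine (Finset.card_union_le _ _).trans (Nat.add_le_add ?_ ?_)
        · refine (Finset.card_union_le _ _).trans (Nat.add_le_add ?_ ?_)
          · exact Finset.card_image_le.trans (by simp)
          · exact Finset.card_image_le.trans (by simp)
        · exact Finset.card_image_le.trans (by simp)
    _ ≤ (2 * T.length + 1) * (Fintype.card Γ + 1) := by ring_nf; omega

def ball (S : List Γ) : ℕ → Finset (List Γ)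
  | 0 => {S}
  | n + 1 => (ball S n).biUnion edits

@[simp] theorem mem_ball_zero {S T : List Γ} : T ∈ ball S 0 ↔ T = S := Finset.mem_singleton

theorem mem_ball_succ_of_mem_edits {S T T' : List Γ} {n : ℕ} (h : T ∈ ball S n)
    (h' : T' ∈ edits T) : T' ∈ ball S (n + 1) :=
  Finset.mem_biUnion.2 ⟨T, h, h'⟩

theorem ball_subset_ball_succ {S T : List Γ} (h : T ∈ edits S) (n : ℕ) :
    ball T n ⊆ ball S (n + 1) := by
  intro S' h'
  induction n generalizing S' with
  | zero =>
    rw [mem_ball_zero.1 h']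
    exact mem_ball_succ_of_mem_edits (mem_ball_zero.2 rfl) h
  | succ n ih =>
    obtain ⟨T', hT', hS'⟩ := Finset.mem_biUnion.1 h'
    exact mem_ball_succ_of_mem_edits (ih hT') hS'

theorem ball_mono (S : List Γ) : Monotone (ball S) :=
  monotone_nat_of_le_succ fun _ T hT => mem_ball_succ_of_mem_edits hT (self_mem_edits T)

theorem cons_mem_ball_cons {T S' : List Γ} {n : ℕ} (x : Γ) (h : S' ∈ ball T n) :
    x :: S' ∈ ball (x :: T) n := by
  induction n generalizing S' with
  | zero => simp_all
  | succ n ih =>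
    obtain ⟨T', hT', hS'⟩ := Finset.mem_biUnion.1 h
    exact mem_ball_succ_of_mem_edits (ih hT') (cons_mem_edits_cons_of_mem x hS')

theorem mem_ball_min {S S' : List Γ} {m n : ℕ} (hm : S' ∈ ball S m) (hn : S' ∈ ball S n) :
    S' ∈ ball S (min m n) := by
  rcases min_choice m n with h | h <;> rwa [h]

theorem mem_ball_dlev (S S' : List Γ) : S' ∈ ball S (dlev S S') := by
  induction S generalizing S' with
  | nil =>
    induction S' with
    | nil => simp
    | cons y ys ih =>
      exact dlev_nil_cons y ys ▸ mem_ball_succ_of_mem_edits ih (cons_mem_edits y ys)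
  | cons x xs ihx =>
    induction S' with
    | nil => exact dlev_cons_nil x xs ▸ ball_subset_ball_succ (mem_edits_cons x xs) _ (ihx [])
    | cons y ys ihy =>
      rw [dlev_cons_cons]
      refine mem_ball_min (ball_subset_ball_succ (mem_edits_cons x xs) _ (ihx _))
        (mem_ball_min (mem_ball_succ_of_mem_edits ihy (cons_mem_edits y ys)) ?_)
      have hsub : x :: ys ∈ ball (x :: xs) (dlev xs ys) := cons_mem_ball_cons x (ihx ys)
      split_ifs with hxy
      · rwa [← hxy]
      · exact mem_ball_succ_of_mem_edits hsub (cons_mem_edits_cons x y ys)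

theorem length_le_of_mem_ball {S T : List Γ} {n : ℕ} (h : T ∈ ball S n) :
    T.length ≤ S.length + n := by
  induction n generalizing T with
  | zero => simp_all
  | succ n ih =>
    obtain ⟨T', hT', hT⟩ := Finset.mem_biUnion.1 h
    have := length_le_of_mem_edits hT
    have := ih hT'
    omega

theorem card_ball_succ_le (S : List Γ) (n : ℕ) :
    (ball S (n + 1)).card ≤
      (ball S n).card * ((2 * (S.length + n) + 1) * (Fintype.card Γ + 1)) := by
  refine Finset.card_biUnion_le_card_mul _ _ _ fun T hT => (card_edits_le T).trans ?_
  have := length_le_of_mem_ball hT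
  gcongr

theorem card_ball_le (S : List Γ) (n : ℕ) :
    (ball S n).card ≤ ((Fintype.card Γ + 1) * (2 * (S.length + n) - 1)) ^ n := by
  induction n with
  | zero => simp [ball]
  | succ n ih =>
    calc (ball S (n + 1)).card
        ≤ (ball S n).card * ((2 * (S.length + n) + 1) * (Fintype.card Γ + 1)) :=
          card_ball_succ_le S n
      _ ≤ ((Fintype.card Γ + 1) * (2 * (S.length + (n + 1)) - 1)) ^ n *
            ((Fintype.card Γ + 1) * (2 * (S.length + (n + 1)) - 1)) := by
          rw [mul_comm (2 * _ + 1)]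
          gcongr ?_ * (_ * ?_)
          · exact ih.trans (by gcongr; omega)
          · omega
      _ = ((Fintype.card Γ + 1) * (2 * (S.length + (n + 1)) - 1)) ^ (n + 1) := (pow_succ _ _).symm

end Levenshtein

theorem ncard_ball_le_general {Γ : Type*} [DecidableEq Γ] [Fintype Γ]
    (S : List Γ) (k : ℕ) :
    Set.ncard {S' : List Γ | dlev S S' ≤ k} ≤
      (Fintype.card Γ + 1) ^ k * (2 * (S.length + k) - 1) ^ k := by
  have hsub : {S' : List Γ | dlev S S' ≤ k} ⊆ Levenshtein.ball S k :=
    fun S' hS' => Levenshtein.ball_mono S hS' (Levenshtein.mem_ball_dlev S S')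
  calc Set.ncard {S' : List Γ | dlev S S' ≤ k}
      ≤ (Levenshtein.ball S k).card := by
        simpa using Set.ncard_le_ncard hsub (Levenshtein.ball S k).finite_toSet
    _ ≤ ((Fintype.card Γ + 1) * (2 * (S.length + k) - 1)) ^ k := Levenshtein.card_ball_le S k
    _ = (Fintype.card Γ + 1) ^ k * (2 * (S.length + k) - 1) ^ k := mul_pow _ _ _

/-- Upper bound on the size of the Levenshtein ball of radius `k`. -/
theorem ncard_ball_le {Γ : Type*} [DecidableEq Γ] [Fintype Γ]
    (hΓ : 1 < Fintype.card Γ) (S : List Γ) (hS : S ≠ []) (k : ℕ) (hk : 1 ≤ k) :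
    Set.ncard {S' : List Γ | dlev S S' ≤ k} ≤
      (Fintype.card Γ + 1) ^ k * (2 * (S.length + k) - 1) ^ k :=
  ncard_ball_le_general S k
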